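/- arXiv:2306.11800 — 3 statements merged into one kernel-verified Lean document; each statement's English description precedes it below -/
import Mathlib

section
/- Let X and X̃ be points in [0,1] with |x_i - x̃_i| ≤ α x_i for all i. Define the squared losses φ(M) = (1/n)Σ_i min_{μ∈M}|x_i - μ|² and φ_q(M) = (1/n)Σ_i min_{μ∈M}|x̃_i - μ|². If M* is the optimal clustering of X with at most k centers and M̃* the optimal clustering of X̃ with at most k centers, then φ_q(M̃*) ≤ 2(φ(M*) + α²). -/
open Finset

theorem squared_optimal_loss_perturbation_bound
    (n k : ℕ) (hn : 0 < n) (hk : 1 ≤ k)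
    (x xt : Fin n → ℝ) (α : ℝ)
    (hα : α ∈ Set.Ioo (0 : ℝ) 1)
    (hx : ∀ i, x i ∈ Set.Icc (0 : ℝ) 1)
    (hxt : ∀ i, xt i ∈ Set.Icc (0 : ℝ) 1)
    (hclose : ∀ i, |x i - xt i| ≤ α * x i)
    (Mstar Mtstar : Finset ℝ)
    (hMstar : Mstar.Nonempty) (hMtstar : Mtstar.Nonempty)
    (hcardM : Mstar.card ≤ k) (hcardMt : Mtstar.card ≤ k)
    (hoptM : ∀ (M : Finset ℝ) (hM : M.Nonempty), M.card ≤ k →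
      (1 / n : ℝ) * ∑ i, Mstar.inf' hMstar (fun μ => |x i - μ| ^ 2)
        ≤ (1 / n : ℝ) * ∑ i, M.inf' hM (fun μ => |x i - μ| ^ 2))
    (hoptMt : ∀ (M : Finset ℝ) (hM : M.Nonempty), M.card ≤ k →
      (1 / n : ℝ) * ∑ i, Mtstar.inf' hMtstar (fun μ => |xt i - μ| ^ 2)
        ≤ (1 / n : ℝ) * ∑ i, M.inf' hM (fun μ => |xt i - μ| ^ 2)) :
    (1 / n : ℝ) * ∑ i, Mtstar.inf' hMtstar (fun μ => |xt i - μ| ^ 2)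
      ≤ 2 * ((1 / n : ℝ) * ∑ i, Mstar.inf' hMstar (fun μ => |x i - μ| ^ 2) + α ^ 2) := by
  have hnpos : (0:ℝ) < n := by exact_mod_cast hn
  have step1 := hoptMt Mstar hMstar hcardM
  refine step1.trans ?_
  -- pointwise bound
  have hpt : ∀ i, Mstar.inf' hMstar (fun μ => |xt i - μ| ^ 2)
      ≤ 2 * Mstar.inf' hMstar (fun μ => |x i - μ| ^ 2) + 2 * α ^ 2 * (x i) ^ 2 := by
    intro i
    obtain ⟨μ, hμ, hmin⟩ := Mstar.exists_mem_eq_inf' hMstar (fun μ => |x i - μ| ^ 2)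
    have h1 : Mstar.inf' hMstar (fun μ => |xt i - μ| ^ 2) ≤ |xt i - μ| ^ 2 :=
      Finset.inf'_le _ hμ
    refine h1.trans ?_
    rw [hmin]
    have h2 : |xt i - μ| ≤ |xt i - x i| + |x i - μ| := abs_sub_le _ _ _
    have h3 : |xt i - μ| ^ 2 ≤ (|xt i - x i| + |x i - μ|) ^ 2 := by
      exact pow_le_pow_left₀ (abs_nonneg _) h2 2
    have h4 : (|xt i - x i| + |x i - μ|) ^ 2 ≤ 2 * |xt i - x i| ^ 2 + 2 * |x i - μ| ^ 2 := by
      nlinarith [sq_nonneg (|xt i - x i| - |x i - μ|)]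
    have h5 : |xt i - x i| ≤ α * x i := by rw [abs_sub_comm]; exact hclose i
    have h6 : |xt i - x i| ^ 2 ≤ (α * x i) ^ 2 :=
      pow_le_pow_left₀ (abs_nonneg _) h5 2
    nlinarith
  have hsum : ∑ i, Mstar.inf' hMstar (fun μ => |xt i - μ| ^ 2)
      ≤ ∑ i, (2 * Mstar.inf' hMstar (fun μ => |x i - μ| ^ 2) + 2 * α ^ 2 * (x i) ^ 2) :=
    Finset.sum_le_sum fun i _ => hpt i
  have hxsq : ∑ i : Fin n, (x i) ^ 2 ≤ (n : ℝ) := by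
    calc ∑ i : Fin n, (x i) ^ 2 ≤ ∑ i : Fin n, (1:ℝ) := by
          refine Finset.sum_le_sum fun i _ => ?_
          have h := hx i
          nlinarith [h.1, h.2]
      _ = n := by simp
  rw [Finset.sum_add_distrib, ← Finset.mul_sum, ← Finset.mul_sum] at hsum
  have := mul_le_mul_of_nonneg_left hsum (by positivity : (0:ℝ) ≤ 1 / n)
  refine this.trans ?_
  have hα2 : (0:ℝ) ≤ α ^ 2 := sq_nonneg α
  rw [mul_add]
  have hr : (1 / n : ℝ) * (2 * α ^ 2 * ∑ i, (x i) ^ 2) ≤ 2 * α ^ 2 := by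
    rw [div_mul_eq_mul_div, one_mul, div_le_iff₀ hnpos]
    nlinarith
  linarith
end

section
/- DDSketch relative error bound: let α ∈ (0,1) and γ = (1+α)/(1-α). For any real x > 0, let j = ⌈log_γ x⌉ be the bucket index, and let the bucket representative be x̂ = 2γ^j/(γ+1). Then |x̂ - x| ≤ α x. -/
/-! The bucket `(γ ^ (j - 1), γ ^ j]` containing `x` has endpoints in ratio `γ`, and the
representative `2 γ ^ j / (γ + 1)` (the harmonic mean of the endpoints) lies within relative
distance `(γ - 1) / (γ + 1)` of every point of the bucket. For `γ = (1 + α) / (1 - α)` this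
ratio is exactly `α`. -/

open Real

theorem le_zpow_ceil_logb {b x : ℝ} (hb : 1 < b) (hx : 0 < x) : x ≤ b ^ ⌈logb b x⌉ := by
  rw [← rpow_intCast, ← logb_le_iff_le_rpow hb hx]
  exact Int.le_ceil _

theorem zpow_ceil_logb_sub_one_lt {b x : ℝ} (hb : 1 < b) (hx : 0 < x) :
    b ^ (⌈logb b x⌉ - 1) < x := by
  rw [← rpow_intCast, ← lt_logb_iff_rpow_lt hb hx, Int.cast_sub, Int.cast_one, sub_lt_iff_lt_add]
  exact Int.ceil_lt_add_one _

theorem zpow_ceil_logb_lt_mul {b x : ℝ} (hb : 1 < b) (hx : 0 < x) :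
    b ^ ⌈logb b x⌉ < b * x := by
  have hb0 : 0 < b := by linarith
  calc b ^ ⌈logb b x⌉ = b * b ^ (⌈logb b x⌉ - 1) := by
        rw [mul_comm, ← zpow_add_one₀ hb0.ne', sub_add_cancel]
    _ < b * x := mul_lt_mul_of_pos_left (zpow_ceil_logb_sub_one_lt hb hx) hb0

theorem abs_two_mul_div_add_one_sub_le {γ u x : ℝ} (hγ : 0 < γ + 1) (hlo : u ≤ γ * x)
    (hhi : x ≤ u) : |2 * u / (γ + 1) - x| ≤ (γ - 1) / (γ + 1) * x := by
  rw [abs_sub_le_iff, div_mul_eq_mul_div, div_sub' hγ.ne', sub_div' hγ.ne',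
    div_le_div_iff_of_pos_right hγ, div_le_div_iff_of_pos_right hγ]
  constructor <;> linarith

theorem one_lt_one_add_div_one_sub {α : ℝ} (h₀ : 0 < α) (h₁ : α < 1) :
    1 < (1 + α) / (1 - α) := by
  rw [one_lt_div (by linarith)]
  linarith

theorem one_add_div_one_sub_sub_one_div_add_one {α : ℝ} (hα : α ≠ 1) :
    ((1 + α) / (1 - α) - 1) / ((1 + α) / (1 - α) + 1) = α := by
  have : 1 - α ≠ 0 := sub_ne_zero.mpr hα.symm
  field_simp
  ring

theorem ddsketch_relative_error
    (α : ℝ) (hα : α ∈ Set.Ioo (0 : ℝ) 1) (x : ℝ) (hx : 0 < x) :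
    let γ : ℝ := (1 + α) / (1 - α)
    let j : ℤ := ⌈Real.logb γ x⌉
    let xhat : ℝ := 2 * γ ^ j / (γ + 1)
    |xhat - x| ≤ α * x := by
  intro γ j xhat
  have hγ : 1 < γ := one_lt_one_add_div_one_sub hα.1 hα.2
  calc |xhat - x| ≤ (γ - 1) / (γ + 1) * x :=
        abs_two_mul_div_add_one_sub_le (by linarith) (zpow_ceil_logb_lt_mul hγ hx).le
          (le_zpow_ceil_logb hγ hx)
    _ = α * x := by rw [one_add_div_one_sub_sub_one_div_add_one hα.2.ne]
end

section
/- Uniqueness of σ-separable clusterings: let X be a finite subset of [0,1] and k ≥ 2. A k-clustering (partition into k nonempty parts) C of X is σ-separable (for σ ≥ 1) if split_C(X) > σ·width_C(X), where split_C(X) is the minimum distance between points in different parts and width_C(X) is the maximum distance between points in the same part. If a σ-separable k-clustering of X exists, it is unique: any two σ-separable k-clusterings of X induce the same partition. -/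
/-- `C` is a partition of the finite set `X` into exactly `k` nonempty blocks. -/
def IsKClustering (X : Finset ℝ) (k : ℕ) (C : Finset (Finset ℝ)) : Prop :=
  C.card = k ∧ (∀ A ∈ C, A.Nonempty) ∧ (∀ A ∈ C, A ⊆ X) ∧
  (∀ x ∈ X, ∃! A, A ∈ C ∧ x ∈ A)

/-- `C` is σ-separable: every inter-cluster distance strictly exceeds σ times
every intra-cluster distance, i.e. `split_C(X) > σ · width_C(X)`. -/
def IsSigmaSeparable (σ : ℝ) (C : Finset (Finset ℝ)) : Prop :=
  ∀ A ∈ C, ∀ B ∈ C, A ≠ B → ∀ x ∈ A, ∀ y ∈ B,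
    ∀ A' ∈ C, ∀ u ∈ A', ∀ v ∈ A', |x - y| > σ * |u - v|

/-- If every block of `C₁` is contained in a block of `C₂`, the two
k-clusterings coincide. -/
lemma refine_eq_aux (X : Finset ℝ) (k : ℕ) (C₁ C₂ : Finset (Finset ℝ))
    (h₁ : IsKClustering X k C₁) (h₂ : IsKClustering X k C₂)
    (H : ∀ A ∈ C₁, ∃ B ∈ C₂, A ⊆ B) : C₁ = C₂ := by
  classical
  obtain ⟨hc1, hne1, hsub1, huniq1⟩ := h₁
  obtain ⟨hc2, hne2, hsub2, huniq2⟩ := h₂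
  choose f hfmem hfsub using fun A hA => (H A hA)
  have hsurj : ∀ B ∈ C₂, ∃ A hA, f A hA = B := by
    intro B hB
    obtain ⟨x, hxB⟩ := hne2 B hB
    have hxX : x ∈ X := hsub2 B hB hxB
    obtain ⟨A, ⟨hA, hxA⟩, -⟩ := huniq1 x hxX
    refine ⟨A, hA, ?_⟩
    exact (huniq2 x hxX).unique ⟨hfmem A hA, hfsub A hA hxA⟩ ⟨hB, hxB⟩
  have hinj := Finset.inj_on_of_surj_on_of_card_le f hfmem hsurj
    (le_of_eq (hc1.trans hc2.symm))
  have hss : C₂ ⊆ C₁ := by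
    intro B hB
    obtain ⟨A, hA, hfeq⟩ := hsurj B hB
    have hBA : B = A := by
      apply Finset.Subset.antisymm
      · intro x hxB
        have hxX : x ∈ X := hsub2 B hB hxB
        obtain ⟨A', ⟨hA', hxA'⟩, -⟩ := huniq1 x hxX
        have hfeq' : f A' hA' = B :=
          (huniq2 x hxX).unique ⟨hfmem A' hA', hfsub A' hA' hxA'⟩ ⟨hB, hxB⟩
        have : A' = A := hinj hA' hA (hfeq'.trans hfeq.symm)
        exact this ▸ hxA'
      · exact hfeq ▸ hfsub A hA
    exact hBA ▸ hA
  exact (Finset.eq_of_subset_of_card_le hss (le_of_eq (hc1.trans hc2.symm))).symm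

/-- From a non-refinement, extract two points in the same block of `C₁` but
different blocks of `C₂`. -/
lemma bad_pair (X : Finset ℝ) (k : ℕ) (C₁ C₂ : Finset (Finset ℝ))
    (h₁ : IsKClustering X k C₁) (h₂ : IsKClustering X k C₂)
    (H : ¬ ∀ A ∈ C₁, ∃ B ∈ C₂, A ⊆ B) :
    ∃ x y A P Q, A ∈ C₁ ∧ x ∈ A ∧ y ∈ A ∧ P ∈ C₂ ∧ Q ∈ C₂ ∧ P ≠ Q ∧
      x ∈ P ∧ y ∈ Q := by
  obtain ⟨hc1, hne1, hsub1, huniq1⟩ := h₁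
  obtain ⟨hc2, hne2, hsub2, huniq2⟩ := h₂
  push_neg at H
  obtain ⟨A, hA, hAn⟩ := H
  obtain ⟨x, hxA⟩ := hne1 A hA
  have hxX : x ∈ X := hsub1 A hA hxA
  obtain ⟨P, ⟨hP, hxP⟩, -⟩ := huniq2 x hxX
  have : ¬ A ⊆ P := hAn P hP
  rw [Finset.not_subset] at this
  obtain ⟨y, hyA, hyP⟩ := this
  have hyX : y ∈ X := hsub1 A hA hyA
  obtain ⟨Q, ⟨hQ, hyQ⟩, -⟩ := huniq2 y hyX
  exact ⟨x, y, A, P, Q, hA, hxA, hyA, hP, hQ, fun h => hyP (h ▸ hyQ), hxP, hyQ⟩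

theorem sigma_separable_clustering_unique
    (X : Finset ℝ) (hX : ↑X ⊆ Set.Icc (0 : ℝ) 1)
    (k : ℕ) (hk : 2 ≤ k) (hcard : k ≤ X.card)
    (σ : ℝ) (hσ : 1 ≤ σ)
    (C₁ C₂ : Finset (Finset ℝ))
    (h₁ : IsKClustering X k C₁) (h₂ : IsKClustering X k C₂)
    (hs₁ : IsSigmaSeparable σ C₁) (hs₂ : IsSigmaSeparable σ C₂) :
    C₁ = C₂ := by
  by_cases H1 : ∀ A ∈ C₁, ∃ B ∈ C₂, A ⊆ B
  · exact refine_eq_aux X k C₁ C₂ h₁ h₂ H1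
  by_cases H2 : ∀ B ∈ C₂, ∃ A ∈ C₁, B ⊆ A
  · exact (refine_eq_aux X k C₂ C₁ h₂ h₁ H2).symm
  exfalso
  obtain ⟨x, y, A, P, Q, hA, hxA, hyA, hP, hQ, hPQ, hxP, hyQ⟩ :=
    bad_pair X k C₁ C₂ h₁ h₂ H1
  obtain ⟨u, v, D, U, V, hD, huD, hvD, hU, hV, hUV, huU, hvV⟩ :=
    bad_pair X k C₂ C₁ h₂ h₁ H2
  have h1 : |x - y| > σ * |u - v| := hs₂ P hP Q hQ hPQ x hxP y hyQ D hD u huD v hvD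
  have h2 : |u - v| > σ * |x - y| := hs₁ U hU V hV hUV u huU v hvV A hA x hxA y hyA
  have hxy : (0:ℝ) ≤ |x - y| := abs_nonneg _
  have huv : (0:ℝ) ≤ |u - v| := abs_nonneg _
  nlinarith [mul_lt_mul_of_pos_left h2 (lt_of_lt_of_le one_pos hσ)]
end
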